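/- The real 3×3 matrix M with rows ( √(−3+√17)/2, (1/2)·√((5−√17)/2), (−1+√17)/4 ), ( −(1/2)·√((1+√17)/2), 1/2, (1/2)·√((5−√17)/2) ), ( (−3+√17)/4, (1/2)·√((1+√17)/2), −√(−3+√17)/2 ) is orthogonal, i.e. Mᵀ·M is the identity matrix. (This is the block of the vertical gauge transformation between the connections ραk and αραk for AH+1 with columns e·b·b̃·F, e·e·ẽ·F, e·ẽ·e·F, from Appendix A of the paper.) -/
import Mathlib


open Matrix

/-- The block of the vertical gauge transformation between ραk and αραk for AH+1 with columns
e·b·b̃·F, e·e·ẽ·F, e·ẽ·e·F. -/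
noncomputable def M : Matrix (Fin 3) (Fin 3) ℝ :=
  !![Real.sqrt (-3 + Real.sqrt 17) / 2, (1 / 2) * Real.sqrt ((5 - Real.sqrt 17) / 2),
       (-1 + Real.sqrt 17) / 4;
     -(1 / 2) * Real.sqrt ((1 + Real.sqrt 17) / 2), 1 / 2,
       (1 / 2) * Real.sqrt ((5 - Real.sqrt 17) / 2);
     (-3 + Real.sqrt 17) / 4, (1 / 2) * Real.sqrt ((1 + Real.sqrt 17) / 2),
       -(Real.sqrt (-3 + Real.sqrt 17)) / 2]

/-- This block of the vertical gauge transformation is orthogonal. -/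
theorem stmt_14 : Mᵀ * M = (1 : Matrix (Fin 3) (Fin 3) ℝ) := by
  have hs : Real.sqrt 17 * Real.sqrt 17 = 17 := Real.mul_self_sqrt (by norm_num)
  have hs3 : 3 ≤ Real.sqrt 17 := by nlinarith [Real.sqrt_nonneg 17]
  have hs5 : Real.sqrt 17 ≤ 5 := by nlinarith [Real.sqrt_nonneg 17]
  have ha : Real.sqrt (-3 + Real.sqrt 17) * Real.sqrt (-3 + Real.sqrt 17) = -3 + Real.sqrt 17 :=
    Real.mul_self_sqrt (by linarith)
  have hb : Real.sqrt ((5 - Real.sqrt 17) / 2) * Real.sqrt ((5 - Real.sqrt 17) / 2)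
      = (5 - Real.sqrt 17) / 2 := Real.mul_self_sqrt (by linarith)
  have hc : Real.sqrt ((1 + Real.sqrt 17) / 2) * Real.sqrt ((1 + Real.sqrt 17) / 2)
      = (1 + Real.sqrt 17) / 2 := Real.mul_self_sqrt (by linarith)
  have habc : Real.sqrt (-3 + Real.sqrt 17)
      = Real.sqrt ((5 - Real.sqrt 17) / 2) * Real.sqrt ((1 + Real.sqrt 17) / 2) := by
    rw [← Real.sqrt_mul (by linarith)]
    congr 1
    nlinarith
  ext i j
  fin_cases i <;> fin_cases j <;>
    simp only [M, Matrix.mul_apply, Fin.sum_univ_three, Matrix.transpose_apply,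
      Matrix.cons_val', Matrix.cons_val_zero, Matrix.cons_val_one, Matrix.head_cons,
      Matrix.head_fin_const, Matrix.empty_val', Matrix.cons_val_fin_one, Matrix.head_val',
      Matrix.of_apply, Matrix.cons_val_two, Matrix.tail_cons, Matrix.one_apply,
      Fin.mk_zero, Fin.mk_one, Fin.zero_eta, Fin.reduceFinMk, ne_eq,
      if_true, if_false, Fin.reduceEq, reduceIte]
  · linear_combination ha / 4 + hc / 4 + hs / 16
  · linear_combination (Real.sqrt ((5 - Real.sqrt 17) / 2) / 4) * habc
      + (Real.sqrt ((1 + Real.sqrt 17) / 2) / 4) * hb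
  · linear_combination habc / 4
  · linear_combination (Real.sqrt ((5 - Real.sqrt 17) / 2) / 4) * habc
      + (Real.sqrt ((1 + Real.sqrt 17) / 2) / 4) * hb
  · linear_combination hb / 4 + hc / 4
  · linear_combination (-(Real.sqrt ((1 + Real.sqrt 17) / 2)) / 4) * habc
      + (-(Real.sqrt ((5 - Real.sqrt 17) / 2)) / 4) * hc
  · linear_combination habc / 4
  · linear_combination (-(Real.sqrt ((1 + Real.sqrt 17) / 2)) / 4) * habc
      + (-(Real.sqrt ((5 - Real.sqrt 17) / 2)) / 4) * hc
  · linear_combination hs / 16 + hb / 4 + ha / 4
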